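/- Let ρ∞(b) = ∫_0^1 exp(-2∑_{j=1}^b (1 - y^j)/j) dy. Then b · ρ∞(b) = ∫_0^b exp(-2∫_0^u (1 - (1 - x/b)^b)/x dx) du for every integer b ≥ 1, and b · ρ∞(b) → ∫_0^∞ exp(-2∫_0^u (1 - e^{-x})/x dx) du as b → ∞. -/

import Mathlib

open Finset Filter MeasureTheory intervalIntegral

/-- The jamming limit of the Rydberg RSA model with blockade range `b`. -/
noncomputable def rhoInf (b : ℕ) : ℝ :=
  ∫ y in (0 : ℝ)..1, Real.exp (-2 * ∑ j ∈ Finset.Icc 1 b, (1 - y ^ j) / (j : ℝ))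

/-- `(1 - (1 - x/b)^b)/x`, extended continuously at `x = 0` by the value `1`. -/
noncomputable def gb (b : ℕ) (x : ℝ) : ℝ :=
  if x = 0 then 1 else (1 - (1 - x / (b : ℝ)) ^ b) / x

/-- `(1 - e^{-x})/x`, extended continuously at `x = 0` by the value `1`. -/
noncomputable def hfun (x : ℝ) : ℝ :=
  if x = 0 then 1 else (1 - Real.exp (-x)) / x

/-!
After the substitution `y = 1 - u/b`, the partial sum `∑_{j ≤ b} (1 - y^j)/j` becomes a primitive
of `gb b`, since `gb b x = (1/b) ∑_{j < b} (1 - x/b)^j` is a geometric sum; this gives the identity.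
For the limit, `gb b → hfun` pointwise with `|gb b| ≤ 1` on `[0, b]`, and the lower bound
`(1 + x)⁻¹ ≤ gb b x`, which comes from `(1 - x/b)^b ≤ e^{-x} ≤ (1 + x)⁻¹`, makes the integrand
at most `(1 + u)^{-2} ≤ (1 + u^2)⁻¹`, uniformly in `b`; dominated convergence applies to both
integrals.
-/

lemma gb_eq_geom_sum {b : ℕ} (hb : b ≠ 0) (x : ℝ) :
    gb b x = (∑ j ∈ range b, (1 - x / b) ^ j) / b := by
  have hb0 : (b : ℝ) ≠ 0 := Nat.cast_ne_zero.2 hb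
  rcases eq_or_ne x 0 with rfl | hx
  · simp [gb, hb0]
  · have hq : 1 - x / b ≠ 1 := by simpa [sub_eq_self] using div_ne_zero hx hb0
    rw [gb, if_neg hx, geom_sum_eq hq, div_div, sub_sub_cancel_left, neg_mul,
      div_mul_cancel₀ x hb0, div_neg, ← neg_div, neg_sub]

lemma continuous_gb {b : ℕ} (hb : b ≠ 0) : Continuous (gb b) := by
  simp only [funext (gb_eq_geom_sum hb)]
  fun_prop

lemma gb_le_one {b : ℕ} (hb : b ≠ 0) {x : ℝ} (hx : 0 ≤ x) (hxb : x ≤ b) : gb b x ≤ 1 := by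
  have hb0 : (0 : ℝ) < b := by positivity
  have hq₀ : 0 ≤ 1 - x / b := by rwa [sub_nonneg, div_le_one hb0]
  have hq₁ : 1 - x / b ≤ 1 := by linarith [div_nonneg hx hb0.le]
  rw [gb_eq_geom_sum hb, div_le_one hb0]
  calc ∑ j ∈ range b, (1 - x / b) ^ j ≤ ∑ _j ∈ range b, (1 : ℝ) :=
        sum_le_sum fun j _ => pow_le_one₀ hq₀ hq₁
    _ = b := by simp

lemma inv_one_add_le_gb {b : ℕ} {x : ℝ} (hx : 0 ≤ x) (hxb : x ≤ b) : (1 + x)⁻¹ ≤ gb b x := by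
  rcases hx.eq_or_lt with rfl | hx
  · simp [gb]
  have hpow : (1 - x / b) ^ b ≤ (1 + x)⁻¹ :=
    calc (1 - x / b) ^ b ≤ Real.exp (-x) := Real.one_sub_div_pow_le_exp_neg hxb
      _ ≤ (1 + x)⁻¹ := by
        rw [Real.exp_neg]
        exact inv_anti₀ (by positivity) (by linarith [Real.add_one_le_exp x])
  have hsplit : (1 + x)⁻¹ * x = 1 - (1 + x)⁻¹ := by field_simp; ring
  rw [gb, if_neg hx.ne', le_div_iff₀ hx, hsplit]
  linarith

lemma tendsto_gb (x : ℝ) : Tendsto (fun b : ℕ => gb b x) atTop (nhds (hfun x)) := by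
  rcases eq_or_ne x 0 with rfl | hx
  · simp [gb, hfun]
  · simp only [gb, hfun, if_neg hx, sub_eq_add_neg (1 : ℝ) (x / _), ← neg_div]
    exact ((Real.tendsto_one_add_div_pow_exp (-x)).const_sub 1).div_const x

lemma hasDerivAt_sum_one_sub_pow_div {b : ℕ} (hb : b ≠ 0) (t : ℝ) :
    HasDerivAt (fun y => ∑ j ∈ Icc 1 b, (1 - (1 - y / b) ^ j) / (j : ℝ)) (gb b t) t := by
  have hterm : ∀ j ∈ Icc 1 b, HasDerivAt (fun y : ℝ => (1 - (1 - y / b) ^ j) / (j : ℝ))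
      ((1 - t / b) ^ (j - 1) / b) t := by
    intro j hj
    have hj0 : (j : ℝ) ≠ 0 := Nat.cast_ne_zero.2 (by simp at hj; omega)
    have hlin : HasDerivAt (fun y : ℝ => 1 - y / b) (-(1 / b)) t := by
      simpa using ((hasDerivAt_id t).div_const (b : ℝ)).const_sub 1
    refine (((hlin.pow j).const_sub 1).div_const (j : ℝ)).congr_deriv ?_
    field_simp
  refine (HasDerivAt.fun_sum hterm).congr_deriv ?_
  rw [gb_eq_geom_sum hb, ← Ico_add_one_right_eq_Icc, sum_Ico_eq_sum_range, sum_div]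
  simp

lemma integral_gb {b : ℕ} (hb : b ≠ 0) (u : ℝ) :
    ∫ x in (0 : ℝ)..u, gb b x = ∑ j ∈ Icc 1 b, (1 - (1 - u / b) ^ j) / (j : ℝ) := by
  rw [integral_eq_sub_of_hasDerivAt (fun t _ => hasDerivAt_sum_one_sub_pow_div hb t)
    ((continuous_gb hb).intervalIntegrable _ _)]
  simp

lemma natCast_mul_rhoInf {b : ℕ} (hb : b ≠ 0) :
    (b : ℝ) * rhoInf b =
      ∫ u in (0 : ℝ)..(b : ℝ), Real.exp (-2 * ∫ x in (0 : ℝ)..u, gb b x) := by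
  have hb0 : (b : ℝ) ≠ 0 := Nat.cast_ne_zero.2 hb
  let S : ℝ → ℝ := fun y => Real.exp (-2 * ∑ j ∈ Icc 1 b, (1 - y ^ j) / (j : ℝ))
  have hdiv := integral_comp_div (a := 0) (b := b) (fun t => S (1 - t)) hb0
  have hflip := integral_comp_sub_left (a := 0) (b := 1) S 1
  simp only [zero_div, div_self hb0, sub_self, sub_zero] at hdiv hflip
  simp only [integral_gb hb]
  rw [hdiv, hflip, rhoInf, smul_eq_mul]

lemma integral_inv_one_add {u : ℝ} (hu : 0 ≤ u) :
    ∫ x in (0 : ℝ)..u, (1 + x)⁻¹ = Real.log (1 + u) := by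
  rw [integral_comp_add_left (fun x => x⁻¹), integral_inv_of_pos (by norm_num) (by linarith),
    add_zero, div_one]

lemma exp_neg_two_mul_integral_gb_le {b : ℕ} (hb : b ≠ 0) {u : ℝ} (hu : 0 ≤ u) (hub : u ≤ b) :
    Real.exp (-2 * ∫ x in (0 : ℝ)..u, gb b x) ≤ (1 + u ^ 2)⁻¹ := by
  have hlog : Real.log (1 + u) ≤ ∫ x in (0 : ℝ)..u, gb b x := by
    rw [← integral_inv_one_add hu]
    have hcont : ContinuousOn (fun x : ℝ => (1 + x)⁻¹) (Set.uIcc 0 u) := by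
      rw [Set.uIcc_of_le hu]
      exact ContinuousOn.inv₀ (by fun_prop) fun x hx => by linarith [hx.1]
    exact integral_mono_on hu hcont.intervalIntegrable ((continuous_gb hb).intervalIntegrable _ _)
      fun x hx => inv_one_add_le_gb hx.1 (hx.2.trans hub)
  calc Real.exp (-2 * ∫ x in (0 : ℝ)..u, gb b x) ≤ Real.exp (-(2 * Real.log (1 + u))) :=
        Real.exp_le_exp.2 (by linarith)
    _ = ((1 + u) ^ 2)⁻¹ := by
        rw [Real.exp_neg, two_mul, Real.exp_add, Real.exp_log (by positivity), sq]
    _ ≤ (1 + u ^ 2)⁻¹ := inv_anti₀ (by positivity) (by nlinarith)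

lemma tendsto_integral_gb {u : ℝ} (hu : 0 ≤ u) :
    Tendsto (fun b : ℕ => ∫ x in (0 : ℝ)..u, gb b x) atTop
      (nhds (∫ x in (0 : ℝ)..u, hfun x)) := by
  refine tendsto_integral_filter_of_dominated_convergence (fun _ => 1) ?_ ?_
    intervalIntegrable_const (.of_forall fun x _ => tendsto_gb x)
  · filter_upwards [eventually_ne_atTop 0] with b hb
    exact (continuous_gb hb).aestronglyMeasurable
  · filter_upwards [eventually_ne_atTop 0, eventually_ge_atTop ⌈u⌉₊] with b hb hub
    refine .of_forall fun x hx => ?_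
    rw [Set.uIoc_of_le hu] at hx
    have hx0 : 0 ≤ x := hx.1.le
    have hxb : x ≤ b := hx.2.trans ((Nat.le_ceil u).trans (by exact_mod_cast hub))
    have hgb : 0 ≤ gb b x :=
      (by positivity : (0 : ℝ) ≤ (1 + x)⁻¹).trans (inv_one_add_le_gb hx0 hxb)
    rw [Real.norm_of_nonneg hgb]
    exact gb_le_one hb hx0 hxb

lemma natCast_mul_rhoInf_eq_integral_indicator {b : ℕ} (hb : b ≠ 0) :
    (b : ℝ) * rhoInf b = ∫ u in Set.Ioi (0 : ℝ),
      (Set.Ioc 0 (b : ℝ)).indicator (fun u => Real.exp (-2 * ∫ x in (0 : ℝ)..u, gb b x)) u := by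
  rw [natCast_mul_rhoInf hb, integral_of_le (Nat.cast_nonneg b),
    MeasureTheory.integral_indicator measurableSet_Ioc, Measure.restrict_restrict measurableSet_Ioc,
    Set.inter_eq_self_of_subset_left Set.Ioc_subset_Ioi_self]

lemma tendsto_natCast_mul_rhoInf :
    Tendsto (fun b : ℕ => (b : ℝ) * rhoInf b) atTop
      (nhds (∫ u in Set.Ioi (0 : ℝ), Real.exp (-2 * ∫ x in (0 : ℝ)..u, hfun x))) := by
  refine Tendsto.congr' ((eventually_ne_atTop 0).mono fun b hb =>
    (natCast_mul_rhoInf_eq_integral_indicator hb).symm) ?_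
  refine tendsto_integral_filter_of_dominated_convergence (fun u => (1 + u ^ 2)⁻¹) ?_ ?_
    integrable_inv_one_add_sq.integrableOn ?_
  · filter_upwards [eventually_ne_atTop 0] with b hb
    have hcont : Continuous fun u => Real.exp (-2 * ∫ x in (0 : ℝ)..u, gb b x) := by
      simp only [integral_gb hb]
      fun_prop
    exact (hcont.aestronglyMeasurable.indicator measurableSet_Ioc).restrict
  · filter_upwards [eventually_ne_atTop 0] with b hb
    refine .of_forall fun u => ?_
    by_cases hu : u ∈ Set.Ioc 0 (b : ℝ)
    · rw [Set.indicator_of_mem hu, Real.norm_of_nonneg (Real.exp_pos _).le]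
      exact exp_neg_two_mul_integral_gb_le hb hu.1.le hu.2
    · rw [Set.indicator_of_notMem hu, norm_zero]
      positivity
  · refine (ae_restrict_iff' measurableSet_Ioi).2 (.of_forall fun u (hu : 0 < u) => ?_)
    refine (((tendsto_integral_gb hu.le).const_mul (-2)).rexp).congr' ?_
    filter_upwards [eventually_ge_atTop ⌈u⌉₊] with b hub
    have hmem : u ∈ Set.Ioc 0 (b : ℝ) := ⟨hu, (Nat.le_ceil u).trans (by exact_mod_cast hub)⟩
    rw [Set.indicator_of_mem hmem]

/-- For every `b ≥ 1`,
`b·ρ∞(b) = ∫₀ᵇ exp(-2∫₀ᵘ (1 - (1 - x/b)^b)/x dx) du`, and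
`b·ρ∞(b) → ∫₀^∞ exp(-2∫₀ᵘ (1 - e^{-x})/x dx) du` (Rényi's parking constant)
as `b → ∞`. -/
theorem stmt12 :
    (∀ b : ℕ, 1 ≤ b →
      (b : ℝ) * rhoInf b =
        ∫ u in (0 : ℝ)..(b : ℝ), Real.exp (-2 * ∫ x in (0 : ℝ)..u, gb b x)) ∧
    Tendsto (fun b : ℕ => (b : ℝ) * rhoInf b) atTop
      (nhds (∫ u in Set.Ioi (0 : ℝ),
        Real.exp (-2 * ∫ x in (0 : ℝ)..u, hfun x))) :=
  ⟨fun _ hb => natCast_mul_rhoInf (Nat.one_le_iff_ne_zero.mp hb), tendsto_natCast_mul_rhoInf⟩
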